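/- For every complex λ and real θ with |sinh(θ/2)| < 1, cosh(λ θ) = F(λ, −λ; 1/2; −sinh²(θ/2)). -/

import Mathlib

/-- The Gauss hypergeometric series `F(a,b;c;z)`. -/
noncomputable def hypF (a b c z : ℂ) : ℂ :=
  ∑' n : ℕ, ((ascPochhammer ℂ n).eval a * (ascPochhammer ℂ n).eval b)
      / ((ascPochhammer ℂ n).eval c * (n.factorial : ℂ)) * z ^ n

/-!
Put `w(t) = (1 - cosh t) / 2 = -sinh² (t / 2)`. Then `w'² = w² - w` and `w'' = w - 1/2`, so for
`F(w) = ∑ cₙ wⁿ` the hypergeometric equation `w (1 - w) F'' + (1/2 - w) F' + λ² F = 0` turns into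
`(F ∘ w)'' = λ² (F ∘ w)`; on coefficients it is the recurrence
`(n + 1) (n + 1/2) cₙ₊₁ = (n² - λ²) cₙ`. As `F(w 0) = 1` and `(F ∘ w)'(0) = 0`, uniqueness for
linear ODEs gives `F(w t) = cosh (λ t)`. The recurrence also shows that `‖cₙ‖` is eventually
non-increasing, hence bounded, which justifies differentiating the series termwise wherever
`|w(t)| < 1`, i.e. `cosh t < 3`.
-/

open Set Filter Topology

noncomputable def hypCoeff (a b c : ℂ) (n : ℕ) : ℂ :=
  (ascPochhammer ℂ n).eval a * (ascPochhammer ℂ n).eval b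
    / ((ascPochhammer ℂ n).eval c * (n.factorial : ℂ))

section HypCoeff

variable {a b c : ℂ}

lemma hypF_eq_tsum (a b c z : ℂ) : hypF a b c z = ∑' n, hypCoeff a b c n * z ^ n := rfl

@[simp]
lemma hypCoeff_zero : hypCoeff a b c 0 = 1 := by simp [hypCoeff]

lemma hypCoeff_succ_mul {n : ℕ} (hc : (ascPochhammer ℂ (n + 1)).eval c ≠ 0) :
    hypCoeff a b c (n + 1) * ((c + n) * (n + 1)) = hypCoeff a b c n * ((a + n) * (b + n)) := by
  rw [ascPochhammer_succ_eval, mul_ne_zero_iff] at hc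
  obtain ⟨hcn, hcn'⟩ := hc
  have hfac : (n.factorial : ℂ) ≠ 0 := by exact_mod_cast n.factorial_ne_zero
  simp only [hypCoeff, ascPochhammer_succ_eval, Nat.factorial_succ, Nat.cast_mul, Nat.cast_succ]
  field_simp

lemma ascPochhammer_eval_half_ne_zero (n : ℕ) : (ascPochhammer ℂ n).eval (1 / 2) ≠ 0 := by
  rw [ne_eq, ascPochhammer_eval_eq_zero_iff]
  rintro ⟨k, -, hk⟩
  have := congrArg Complex.re hk
  norm_num at this
  linarith [(k.cast_nonneg : (0 : ℝ) ≤ k)]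

lemma hypCoeff_cosh_succ_mul (lam : ℂ) (n : ℕ) :
    hypCoeff lam (-lam) (1 / 2) (n + 1) * ((n + 1) * (n + 1 / 2))
      = hypCoeff lam (-lam) (1 / 2) n * (n ^ 2 - lam ^ 2) := by
  linear_combination
    hypCoeff_succ_mul (a := lam) (b := -lam) (ascPochhammer_eval_half_ne_zero (n + 1))

lemma norm_hypCoeff_cosh_succ_le {lam : ℂ} {n : ℕ} (hn : ‖lam‖ ^ 2 ≤ n) :
    ‖hypCoeff lam (-lam) (1 / 2) (n + 1)‖ ≤ ‖hypCoeff lam (-lam) (1 / 2) n‖ := by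
  have hpos : (0 : ℝ) < (n + 1) * (n + 1 / 2) := by positivity
  have hnorm : ‖((n : ℂ) + 1) * (n + 1 / 2)‖ = (n + 1) * (n + 1 / 2) := by
    have : ((n : ℂ) + 1) * (n + 1 / 2) = (((n + 1) * (n + 1 / 2) : ℝ) : ℂ) := by push_cast; rfl
    rw [this, Complex.norm_real, Real.norm_of_nonneg hpos.le]
  have hle : ‖(n : ℂ) ^ 2 - lam ^ 2‖ ≤ (n + 1) * (n + 1 / 2) :=
    calc ‖(n : ℂ) ^ 2 - lam ^ 2‖ ≤ (n : ℝ) ^ 2 + ‖lam‖ ^ 2 :=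
          (norm_sub_le _ _).trans_eq (by rw [norm_pow, norm_pow, Complex.norm_natCast])
      _ ≤ (n + 1) * (n + 1 / 2) := by nlinarith
  have h := congrArg norm (hypCoeff_cosh_succ_mul lam n)
  rw [norm_mul, hnorm, norm_mul] at h
  refine le_of_mul_le_mul_right ?_ hpos
  rw [h]
  exact mul_le_mul_of_nonneg_left hle (norm_nonneg _)

lemma exists_norm_hypCoeff_cosh_le (lam : ℂ) :
    ∃ C, ∀ n, ‖hypCoeff lam (-lam) (1 / 2) n‖ ≤ C := by
  set N := ⌈‖lam‖ ^ 2⌉₊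
  have hanti : AntitoneOn (fun n => ‖hypCoeff lam (-lam) (1 / 2) n‖) (Ici N) :=
    antitoneOn_nat_Ici_of_succ_le fun n hn =>
      norm_hypCoeff_cosh_succ_le ((Nat.le_ceil _).trans (by exact_mod_cast hn))
  have hbdd := (isBoundedUnder_of_eventually_le (f := atTop) (eventually_atTop.2
    ⟨N, fun n hn => hanti (mem_Ici.2 le_rfl) (mem_Ici.2 hn) hn⟩)).bddAbove_range
  obtain ⟨C, hC⟩ := hbdd
  exact ⟨C, fun n => hC (mem_range_self n)⟩

end HypCoeff

noncomputable def hypArg (t : ℝ) : ℝ := (1 - Real.cosh t) / 2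

lemma hypArg_eq_neg_sinh_sq (t : ℝ) : hypArg t = -Real.sinh (t / 2) ^ 2 := by
  have h := Real.cosh_two_mul (t / 2)
  rw [mul_div_cancel₀ t two_ne_zero, Real.cosh_sq] at h
  rw [hypArg, h]
  ring

@[simp]
lemma hypArg_zero : hypArg 0 = 0 := by simp [hypArg]

lemma hasDerivAt_hypArg (t : ℝ) : HasDerivAt hypArg (-Real.sinh t / 2) t := by
  show HasDerivAt (fun t => (1 - Real.cosh t) / 2) _ t
  exact (((Real.hasDerivAt_cosh t).const_sub 1).div_const 2).congr_deriv (by ring)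

lemma sinh_div_two_sq (t : ℝ) : (-Real.sinh t / 2) ^ 2 = hypArg t ^ 2 - hypArg t := by
  rw [hypArg, div_pow, neg_sq, Real.sinh_sq]
  ring

lemma hasDerivAt_hypArg_pow (n : ℕ) (t : ℝ) :
    HasDerivAt (fun t => (hypArg t : ℂ) ^ n)
      (n * (hypArg t : ℂ) ^ (n - 1) * ((-Real.sinh t / 2 : ℝ) : ℂ)) t :=
  (hasDerivAt_hypArg t).ofReal_comp.pow n

lemma hasDerivAt_hypArg_pow_deriv (n : ℕ) (t : ℝ) :
    HasDerivAt (fun t => n * (hypArg t : ℂ) ^ (n - 1) * ((-Real.sinh t / 2 : ℝ) : ℂ))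
      (n ^ 2 * (hypArg t : ℂ) ^ n - n * (n - 1 / 2) * (hypArg t : ℂ) ^ (n - 1)) t := by
  have hsinh :
      HasDerivAt (fun t => ((-Real.sinh t / 2 : ℝ) : ℂ)) ((hypArg t - 1 / 2 : ℝ) : ℂ) t :=
    (((Real.hasDerivAt_sinh t).neg.div_const 2).congr_deriv (by rw [hypArg]; ring)).ofReal_comp
  have h := ((hasDerivAt_hypArg_pow (n - 1) t).const_mul (n : ℂ)).mul hsinh
  refine h.congr_deriv ?_
  have hsq : (((-Real.sinh t / 2 : ℝ)) : ℂ) ^ 2 = (hypArg t : ℂ) ^ 2 - hypArg t := by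
    exact_mod_cast sinh_div_two_sq t
  rcases n with _ | _ | n
  · simp
  · push_cast; ring
  · simp only [Nat.add_sub_cancel]
    push_cast at hsq ⊢
    linear_combination ((n : ℂ) + 2) * (n + 1) * (hypArg t : ℂ) ^ n * hsq

lemma summable_sq_mul_pow_pred {ρ : ℝ} (hρ0 : 0 ≤ ρ) (hρ1 : ρ < 1) :
    Summable fun n : ℕ => ((n : ℝ) + 1) ^ 2 * ρ ^ (n - 1) := by
  have hρ : ‖ρ‖ < 1 := by rwa [Real.norm_of_nonneg hρ0]
  refine (summable_nat_add_iff 1).mp ?_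
  refine (((summable_pow_mul_geometric_of_norm_lt_one 2 hρ).add
    ((summable_pow_mul_geometric_of_norm_lt_one 1 hρ).mul_left 4)).add
    ((summable_pow_mul_geometric_of_norm_lt_one 0 hρ).mul_left 4)).congr fun n => ?_
  simp only [Nat.add_sub_cancel]
  push_cast
  ring

section Majorant

variable {c : ℕ → ℂ} {C ρ : ℝ} {z d : ℂ}

lemma norm_pow_le_pow_pred (hz : ‖z‖ ≤ ρ) (hρ : ρ ≤ 1) (n : ℕ) : ‖z ^ n‖ ≤ ρ ^ (n - 1) := by
  rw [norm_pow]
  exact (pow_le_pow_left₀ (norm_nonneg z) hz n).trans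
    (pow_le_pow_of_le_one ((norm_nonneg z).trans hz) hρ (Nat.sub_le n 1))

lemma norm_pow_pred_le (hz : ‖z‖ ≤ ρ) (n : ℕ) : ‖z ^ (n - 1)‖ ≤ ρ ^ (n - 1) := by
  rw [norm_pow]
  exact pow_le_pow_left₀ (norm_nonneg z) hz _

lemma norm_coeff_mul_pow_le (hc : ∀ n, ‖c n‖ ≤ C) (hz : ‖z‖ ≤ ρ) (hρ : ρ ≤ 1) (n : ℕ) :
    ‖c n * z ^ n‖ ≤ 2 * C * ((n : ℝ) + 1) ^ 2 * ρ ^ (n - 1) := by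
  have hC : 0 ≤ C := (norm_nonneg _).trans (hc 0)
  have hρ0 : 0 ≤ ρ := (norm_nonneg z).trans hz
  calc ‖c n * z ^ n‖ ≤ C * ρ ^ (n - 1) := by
        rw [norm_mul]; exact mul_le_mul (hc n) (norm_pow_le_pow_pred hz hρ n) (norm_nonneg _) hC
    _ ≤ 2 * C * ((n : ℝ) + 1) ^ 2 * ρ ^ (n - 1) := by
        have : (1 : ℝ) ≤ 2 * ((n : ℝ) + 1) ^ 2 := by nlinarith [n.cast_nonneg (α := ℝ)]
        have := pow_nonneg hρ0 (n - 1)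
        nlinarith [mul_nonneg hC this]

lemma norm_coeff_mul_sq_mul_pow_le (hc : ∀ n, ‖c n‖ ≤ C) (hz : ‖z‖ ≤ ρ) (hρ : ρ ≤ 1) (n : ℕ) :
    ‖c n * (n ^ 2 * z ^ n)‖ ≤ 2 * C * ((n : ℝ) + 1) ^ 2 * ρ ^ (n - 1) := by
  have hC : 0 ≤ C := (norm_nonneg _).trans (hc 0)
  have hρ0 : 0 ≤ ρ := (norm_nonneg z).trans hz
  calc ‖c n * (n ^ 2 * z ^ n)‖ ≤ C * ((n : ℝ) ^ 2 * ρ ^ (n - 1)) := by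
        rw [norm_mul, norm_mul, norm_pow, Complex.norm_natCast]
        gcongr
        · exact hc n
        · exact norm_pow_le_pow_pred hz hρ n
    _ ≤ 2 * C * ((n : ℝ) + 1) ^ 2 * ρ ^ (n - 1) := by
        have : (n : ℝ) ^ 2 ≤ 2 * ((n : ℝ) + 1) ^ 2 := by nlinarith [n.cast_nonneg (α := ℝ)]
        have := pow_nonneg hρ0 (n - 1)
        nlinarith [mul_nonneg hC this]

lemma norm_coeff_mul_pow_deriv_le (hc : ∀ n, ‖c n‖ ≤ C) (hz : ‖z‖ ≤ ρ) (hd : ‖d‖ ≤ 2) (n : ℕ) :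
    ‖c n * (n * z ^ (n - 1) * d)‖ ≤ 2 * C * ((n : ℝ) + 1) ^ 2 * ρ ^ (n - 1) := by
  have hC : 0 ≤ C := (norm_nonneg _).trans (hc 0)
  have hρ0 : 0 ≤ ρ := (norm_nonneg z).trans hz
  calc ‖c n * (n * z ^ (n - 1) * d)‖ ≤ C * (n * ρ ^ (n - 1) * 2) := by
        rw [norm_mul, norm_mul, norm_mul, Complex.norm_natCast]
        gcongr
        · exact hc n
        · exact norm_pow_pred_le hz n
    _ ≤ 2 * C * ((n : ℝ) + 1) ^ 2 * ρ ^ (n - 1) := by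
        have : (n : ℝ) ≤ ((n : ℝ) + 1) ^ 2 := by nlinarith
        have := pow_nonneg hρ0 (n - 1)
        nlinarith [mul_nonneg hC this]

lemma norm_coeff_mul_pow_deriv2_le (hc : ∀ n, ‖c n‖ ≤ C) (hz : ‖z‖ ≤ ρ) (hρ : ρ ≤ 1) (n : ℕ) :
    ‖c n * (n ^ 2 * z ^ n - n * (n - 1 / 2) * z ^ (n - 1))‖
      ≤ 2 * C * ((n : ℝ) + 1) ^ 2 * ρ ^ (n - 1) := by
  have hC : 0 ≤ C := (norm_nonneg _).trans (hc 0)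
  have hρ0 : 0 ≤ ρ := (norm_nonneg z).trans hz
  have hhalf : ‖(n : ℂ) - 1 / 2‖ ≤ n + 1 / 2 :=
    (norm_sub_le _ _).trans_eq (by rw [Complex.norm_natCast]; norm_num)
  calc ‖c n * (n ^ 2 * z ^ n - n * (n - 1 / 2) * z ^ (n - 1))‖
      ≤ C * ((n : ℝ) ^ 2 * ρ ^ (n - 1) + n * (n + 1 / 2) * ρ ^ (n - 1)) := by
        rw [norm_mul]
        gcongr
        · exact hc n
        refine (norm_sub_le _ _).trans ?_
        rw [norm_mul, norm_mul, norm_mul, norm_pow, Complex.norm_natCast]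
        gcongr
        · exact norm_pow_le_pow_pred hz hρ n
        · exact norm_pow_pred_le hz n
    _ ≤ 2 * C * ((n : ℝ) + 1) ^ 2 * ρ ^ (n - 1) := by
        have : (n : ℝ) ^ 2 + n * (n + 1 / 2) ≤ 2 * ((n : ℝ) + 1) ^ 2 := by nlinarith
        have := pow_nonneg hρ0 (n - 1)
        nlinarith [mul_nonneg hC this]

end Majorant

lemma abs_hypArg_le {t T : ℝ} (ht : t ∈ Ioo (-T) T) : |hypArg t| ≤ (Real.cosh T - 1) / 2 := by
  have hcosh : Real.cosh t ≤ Real.cosh T :=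
    Real.cosh_le_cosh.2 ((abs_lt.2 ht).le.trans (le_abs_self T))
  rw [hypArg, abs_of_nonpos (by linarith [Real.one_le_cosh t])]
  linarith

lemma abs_neg_sinh_div_two_le {t : ℝ} (ht : |hypArg t| ≤ 1) : |-Real.sinh t / 2| ≤ 2 := by
  refine abs_le_of_sq_le_sq ?_ zero_le_two
  rw [sinh_div_two_sq]
  have := abs_le.1 ht
  nlinarith

noncomputable def hypSeries (c : ℕ → ℂ) (t : ℝ) : ℂ := ∑' n, c n * (hypArg t : ℂ) ^ n

noncomputable def hypSeriesDeriv (c : ℕ → ℂ) (t : ℝ) : ℂ :=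
  ∑' n, c n * (n * (hypArg t : ℂ) ^ (n - 1) * ((-Real.sinh t / 2 : ℝ) : ℂ))

section Series

variable {c : ℕ → ℂ} {C T t : ℝ}

lemma exists_norm_hypArg_le (hT : Real.cosh T < 3) :
    ∃ ρ, 0 ≤ ρ ∧ ρ < 1 ∧ ∀ y ∈ Ioo (-T) T,
      ‖(hypArg y : ℂ)‖ ≤ ρ ∧ ‖((-Real.sinh y / 2 : ℝ) : ℂ)‖ ≤ 2 := by
  refine ⟨(Real.cosh T - 1) / 2, by linarith [Real.one_le_cosh T], by linarith, fun y hy => ?_⟩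
  simp only [Complex.norm_real, Real.norm_eq_abs]
  exact ⟨abs_hypArg_le hy, abs_neg_sinh_div_two_le ((abs_hypArg_le hy).trans (by linarith))⟩

lemma hasDerivAt_hypSeries (hc : ∀ n, ‖c n‖ ≤ C) (hT : Real.cosh T < 3) (ht : t ∈ Ioo (-T) T) :
    HasDerivAt (hypSeries c) (hypSeriesDeriv c t) t := by
  obtain ⟨ρ, hρ0, hρ1, hbound⟩ := exists_norm_hypArg_le hT
  have hu := (summable_sq_mul_pow_pred hρ0 hρ1).mul_left (2 * C)
  exact hasDerivAt_tsum_of_isPreconnected hu isOpen_Ioo isPreconnected_Ioo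
    (fun n y _ => (hasDerivAt_hypArg_pow n y).const_mul (c n))
    (fun n y hy => (norm_coeff_mul_pow_deriv_le hc (hbound y hy).1 (hbound y hy).2 n).trans_eq
      (mul_assoc _ _ _))
    ht (.of_norm_bounded hu fun n =>
      (norm_coeff_mul_pow_le hc (hbound t ht).1 hρ1.le n).trans_eq (mul_assoc _ _ _)) ht

lemma hasDerivAt_hypSeriesDeriv (hc : ∀ n, ‖c n‖ ≤ C) (hT : Real.cosh T < 3)
    (ht : t ∈ Ioo (-T) T) :
    HasDerivAt (hypSeriesDeriv c) (∑' n, c n *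
      (n ^ 2 * (hypArg t : ℂ) ^ n - n * (n - 1 / 2) * (hypArg t : ℂ) ^ (n - 1))) t := by
  obtain ⟨ρ, hρ0, hρ1, hbound⟩ := exists_norm_hypArg_le hT
  have hu := (summable_sq_mul_pow_pred hρ0 hρ1).mul_left (2 * C)
  exact hasDerivAt_tsum_of_isPreconnected hu isOpen_Ioo isPreconnected_Ioo
    (fun n y _ => (hasDerivAt_hypArg_pow_deriv n y).const_mul (c n))
    (fun n y hy => (norm_coeff_mul_pow_deriv2_le hc (hbound y hy).1 hρ1.le n).trans_eq
      (mul_assoc _ _ _))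
    ht (.of_norm_bounded hu fun n =>
      (norm_coeff_mul_pow_deriv_le hc (hbound t ht).1 (hbound t ht).2 n).trans_eq
        (mul_assoc _ _ _)) ht

lemma tsum_coeff_mul_hypODE {lam z : ℂ}
    (hrec : ∀ n : ℕ, c (n + 1) * ((n + 1) * (n + 1 / 2)) = c n * (n ^ 2 - lam ^ 2))
    (hs : Summable fun n => c n * z ^ n) (hs2 : Summable fun n => c n * (n ^ 2 * z ^ n)) :
    ∑' n, c n * (n ^ 2 * z ^ n - n * (n - 1 / 2) * z ^ (n - 1)) = lam ^ 2 * ∑' n, c n * z ^ n := by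
  set A : ℕ → ℂ := fun n => c n * (n * (n - 1 / 2) * z ^ (n - 1))
  have hA (n : ℕ) : A (n + 1) = c n * (n ^ 2 * z ^ n) - lam ^ 2 * (c n * z ^ n) := by
    simp only [A, Nat.add_sub_cancel]
    push_cast
    linear_combination z ^ n * hrec n
  have hAsum : Summable A :=
    (summable_nat_add_iff 1).mp ((hs2.sub (hs.mul_left _)).congr fun n => (hA n).symm)
  calc ∑' n, c n * (n ^ 2 * z ^ n - n * (n - 1 / 2) * z ^ (n - 1))
      = ∑' n, c n * (n ^ 2 * z ^ n) - ∑' n, A n := by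
        rw [← hs2.tsum_sub hAsum]; exact tsum_congr fun n => by ring
    _ = ∑' n, c n * (n ^ 2 * z ^ n) - ∑' n, A (n + 1) := by
        rw [hAsum.tsum_eq_zero_add]; simp [A]
    _ = lam ^ 2 * ∑' n, c n * z ^ n := by
        rw [tsum_congr hA, hs2.tsum_sub (hs.mul_left _), tsum_mul_left]; ring

lemma hasDerivAt_hypSeriesDeriv_of_rec {lam : ℂ} (hc : ∀ n, ‖c n‖ ≤ C)
    (hrec : ∀ n : ℕ, c (n + 1) * ((n + 1) * (n + 1 / 2)) = c n * (n ^ 2 - lam ^ 2))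
    (hT : Real.cosh T < 3) (ht : t ∈ Ioo (-T) T) :
    HasDerivAt (hypSeriesDeriv c) (lam ^ 2 * hypSeries c t) t := by
  obtain ⟨ρ, hρ0, hρ1, hbound⟩ := exists_norm_hypArg_le hT
  have hu := (summable_sq_mul_pow_pred hρ0 hρ1).mul_left (2 * C)
  rw [hypSeries, ← tsum_coeff_mul_hypODE hrec
    (.of_norm_bounded hu fun n =>
      (norm_coeff_mul_pow_le hc (hbound t ht).1 hρ1.le n).trans_eq (mul_assoc _ _ _))
    (.of_norm_bounded hu fun n =>
      (norm_coeff_mul_sq_mul_pow_le hc (hbound t ht).1 hρ1.le n).trans_eq (mul_assoc _ _ _))]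
  exact hasDerivAt_hypSeriesDeriv hc hT ht

lemma hypSeries_zero (c : ℕ → ℂ) : hypSeries c 0 = c 0 := by
  rw [hypSeries, tsum_eq_single 0 fun n hn => by simp [hn]]
  simp

lemma hypSeriesDeriv_zero (c : ℕ → ℂ) : hypSeriesDeriv c 0 = 0 := by
  simp [hypSeriesDeriv]

end Series

lemma hasDerivAt_cosh_mul (lam z : ℂ) :
    HasDerivAt (fun z => Complex.cosh (lam * z)) (lam * Complex.sinh (lam * z)) z := by
  convert ((hasDerivAt_id' z).const_mul lam).ccosh using 1
  ring

lemma hasDerivAt_sinh_mul (lam z : ℂ) :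
    HasDerivAt (fun z => Complex.sinh (lam * z)) (lam * Complex.cosh (lam * z)) z := by
  convert ((hasDerivAt_id' z).const_mul lam).csinh using 1
  ring

lemma eqOn_cosh_of_hasDerivAt {lam : ℂ} {a b : ℝ} {f f' : ℝ → ℂ} (h0 : (0 : ℝ) ∈ Ioo a b)
    (hf : ∀ t ∈ Ioo a b, HasDerivAt f (f' t) t)
    (hf' : ∀ t ∈ Ioo a b, HasDerivAt f' (lam ^ 2 * f t) t) (hf0 : f 0 = 1) (hf'0 : f' 0 = 0) :
    EqOn f (fun t => Complex.cosh (lam * t)) (Ioo a b) := by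
  let L : ℂ × ℂ →L[ℂ] ℂ × ℂ :=
    (ContinuousLinearMap.snd ℂ ℂ ℂ).prod (lam ^ 2 • ContinuousLinearMap.fst ℂ ℂ ℂ)
  have hL (p : ℂ × ℂ) : L p = (p.2, lam ^ 2 * p.1) := rfl
  have hcosh (t : ℝ) :
      HasDerivAt (fun t : ℝ => (Complex.cosh (lam * t), lam * Complex.sinh (lam * t)))
      (L (Complex.cosh (lam * t), lam * Complex.sinh (lam * t))) t := by
    rw [hL]
    refine (hasDerivAt_cosh_mul lam t).comp_ofReal.prodMk ?_
    exact ((hasDerivAt_sinh_mul lam t).const_mul lam).comp_ofReal.congr_deriv (by ring)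
  have key := ODE_solution_unique_of_mem_Ioo (v := fun _ => L) (s := fun _ => univ)
    (fun _ _ => L.lipschitz.lipschitzOnWith) h0
    (fun t ht => ⟨by rw [hL]; exact (hf t ht).prodMk (hf' t ht), mem_univ _⟩)
    (fun t _ => ⟨hcosh t, mem_univ _⟩) (by simp [hf0, hf'0])
  exact fun t ht => congrArg Prod.fst (key ht)

theorem cosh_eq_hypF (lam : ℂ) (θ : ℝ) (hθ : |Real.sinh (θ / 2)| < 1) :
    Complex.cosh (lam * θ)
      = hypF lam (-lam) (1 / 2) ((-(Real.sinh (θ / 2) ^ 2) : ℝ) : ℂ) := by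
  obtain ⟨C, hC⟩ := exists_norm_hypCoeff_cosh_le lam
  have hcosh : Real.cosh |θ| < 3 := by
    have hw := hypArg_eq_neg_sinh_sq θ
    rw [hypArg] at hw
    rw [Real.cosh_abs]
    linarith [(sq_lt_one_iff_abs_lt_one _).2 hθ]
  obtain ⟨T, hT, hθT⟩ : ∃ T, Real.cosh T < 3 ∧ |θ| < T :=
    (((Real.continuous_cosh.tendsto _).eventually (gt_mem_nhds hcosh)).filter_mono
      nhdsWithin_le_nhds |>.and self_mem_nhdsWithin).exists (f := 𝓝[>] |θ|)
  have h0 : (0 : ℝ) ∈ Ioo (-T) T := by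
    constructor <;> linarith [abs_nonneg θ]
  have hsol := eqOn_cosh_of_hasDerivAt h0
    (fun t ht => hasDerivAt_hypSeries hC hT ht)
    (fun t ht => hasDerivAt_hypSeriesDeriv_of_rec hC (hypCoeff_cosh_succ_mul lam) hT ht)
    (by rw [hypSeries_zero, hypCoeff_zero]) (hypSeriesDeriv_zero _)
  rw [hypF_eq_tsum, ← hypArg_eq_neg_sinh_sq]
  exact (hsol (abs_lt.1 hθT)).symm
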